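/- Let λ ∈ ℂ with λ_i = Im λ > 0 and f ∈ L²([b, +∞); H). Then for almost every t ≥ b the function s ↦ e^{−iλ(t−s)} exp(i(t−s)A) f(s) is Bochner integrable on (t, +∞), and the function u(t) = ∫_t^{∞} e^{−iλ(t−s)} exp(i(t−s)A) f(s) ds belongs to L²([b, +∞); H) with ‖u‖_{L²([b,∞);H)} ≤ (1/λ_i) ‖f‖_{L²([b,∞);H)}. -/

import Mathlib

open MeasureTheory Set Complex
open scoped InnerProductSpace

/-- The operator exponential `exp(iτA)` for a bounded operator `A` and `τ ∈ ℝ`. -/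
noncomputable def expIA {H : Type*} [NormedAddCommGroup H] [InnerProductSpace ℂ H]
    [CompleteSpace H] (A : H →L[ℂ] H) (τ : ℝ) : H →L[ℂ] H :=
  NormedSpace.exp ((Complex.I * (τ : ℂ)) • A)

/-!
Since `exp(iτA)` is unitary, the integrand has norm `e^{Im λ (t - s)} ‖f s‖`, so `‖u t‖` is
dominated by the positive kernel `k(t, s) = 𝟙[t < s] e^{Im λ (t - s)}` applied to `‖f‖`. Every row
integral `∫ k(t, s) ds` and every column integral `∫ k(t, s) dt` equals `1 / Im λ`, so the Schur
test (Cauchy–Schwarz in `s`, then Tonelli) gives `∫ ‖u‖² ≤ (1 / Im λ)² ∫ ‖f‖²`. The same bound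
makes `∫_t^∞ ‖integrand‖` finite for almost every `t`.
-/

open scoped ENNReal
open Function

theorem ENNReal.sq_lintegral_mul_le {α : Type*} [MeasurableSpace α] {μ : Measure α}
    {k F : α → ℝ≥0∞} (hk : AEMeasurable k μ) (hF : AEMeasurable F μ) :
    (∫⁻ a, k a * F a ∂μ) ^ 2 ≤ (∫⁻ a, k a ∂μ) * ∫⁻ a, k a * F a ^ 2 ∂μ := by
  have hsqrt : ∀ x : ℝ≥0∞, (x ^ 2) ^ (1 / 2 : ℝ) = x := fun x => by
    rw [← ENNReal.rpow_natCast, ← ENNReal.rpow_mul]; norm_num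
  have hholder := ENNReal.lintegral_mul_norm_pow_le (g := fun a => k a * F a ^ 2) hk
    (hk.mul (hF.pow_const 2)) (p := 1 / 2) (q := 1 / 2) (by norm_num) (by norm_num) (by norm_num)
  have hpt : ∀ a, k a ^ (1 / 2 : ℝ) * (k a * F a ^ 2) ^ (1 / 2 : ℝ) = k a * F a := fun a => by
    rw [← ENNReal.mul_rpow_of_nonneg _ _ (by norm_num), ← hsqrt (k a * F a)]
    ring_nf
  simp only [hpt] at hholder
  calc (∫⁻ a, k a * F a ∂μ) ^ 2
      ≤ ((∫⁻ a, k a ∂μ) ^ (1 / 2 : ℝ) * (∫⁻ a, k a * F a ^ 2 ∂μ) ^ (1 / 2 : ℝ)) ^ 2 := by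
        gcongr
    _ = (∫⁻ a, k a ∂μ) * ∫⁻ a, k a * F a ^ 2 ∂μ := by
        rw [mul_pow, ← ENNReal.rpow_natCast, ← ENNReal.rpow_natCast (n := 2), ← ENNReal.rpow_mul,
          ← ENNReal.rpow_mul]
        norm_num

theorem lintegral_sq_lintegral_mul_le_of_forall_lintegral_le {α β : Type*} [MeasurableSpace α]
    [MeasurableSpace β] {μ : Measure α} {ν : Measure β} [SFinite μ] [SFinite ν]
    {k : α → β → ℝ≥0∞} (hk : Measurable (uncurry k)) {F : β → ℝ≥0∞} (hF : Measurable F)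
    {C₁ C₂ : ℝ≥0∞} (hrow : ∀ t, ∫⁻ s, k t s ∂ν ≤ C₁) (hcol : ∀ s, ∫⁻ t, k t s ∂μ ≤ C₂) :
    ∫⁻ t, (∫⁻ s, k t s * F s ∂ν) ^ 2 ∂μ ≤ C₁ * C₂ * ∫⁻ s, F s ^ 2 ∂ν := by
  have hkF : Measurable (uncurry fun t s => k t s * F s ^ 2) :=
    hk.mul ((hF.pow_const 2).comp measurable_snd)
  calc ∫⁻ t, (∫⁻ s, k t s * F s ∂ν) ^ 2 ∂μ
      ≤ ∫⁻ t, C₁ * ∫⁻ s, k t s * F s ^ 2 ∂ν ∂μ := lintegral_mono fun t =>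
        (ENNReal.sq_lintegral_mul_le (hk.comp measurable_prodMk_left).aemeasurable
          hF.aemeasurable).trans (mul_le_mul_left (hrow t) _)
    _ = C₁ * ∫⁻ s, ∫⁻ t, k t s * F s ^ 2 ∂μ ∂ν := by
        have hinner : Measurable fun t => ∫⁻ s, k t s * F s ^ 2 ∂ν := hkF.lintegral_prod_right'
        rw [lintegral_const_mul _ hinner, lintegral_lintegral_swap hkF.aemeasurable]
    _ = C₁ * ∫⁻ s, (∫⁻ t, k t s ∂μ) * F s ^ 2 ∂ν := by
        congr 1
        exact lintegral_congr fun s => lintegral_mul_const _ (hk.comp measurable_prodMk_right)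
    _ ≤ C₁ * ∫⁻ s, C₂ * F s ^ 2 ∂ν := by gcongr with s; exact hcol s
    _ = C₁ * C₂ * ∫⁻ s, F s ^ 2 ∂ν := by rw [lintegral_const_mul _ (hF.pow_const 2), mul_assoc]

theorem StronglyMeasurable.setIntegral_Ioi {α E : Type*} [MeasurableSpace α] [LinearOrder α]
    [TopologicalSpace α] [OrderClosedTopology α] [SecondCountableTopology α]
    [OpensMeasurableSpace α] {μ : Measure α} [SFinite μ] [NormedAddCommGroup E] [NormedSpace ℝ E]
    {F : α → α → E} (hF : StronglyMeasurable (uncurry F)) :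
    StronglyMeasurable fun t => ∫ s in Ioi t, F t s ∂μ := by
  have hlt : MeasurableSet {p : α × α | p.1 < p.2} := measurableSet_lt measurable_fst measurable_snd
  convert (hF.indicator hlt).integral_prod_right' (ν := μ) using 1
  funext t
  rw [← integral_indicator measurableSet_Ioi]
  rfl

theorem sq_eLpNorm_two {α ε : Type*} [MeasurableSpace α] {μ : Measure α} [ENorm ε] (f : α → ε) :
    eLpNorm f 2 μ ^ 2 = ∫⁻ a, ‖f a‖ₑ ^ 2 ∂μ := by
  simpa using eLpNorm_nnreal_pow_eq_lintegral (f := f) (μ := μ) (p := 2) two_ne_zero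

theorem eLpNorm_two_le_of_lintegral_sq_le {α ε ε' : Type*} [MeasurableSpace α] {μ : Measure α}
    [ENorm ε] [ENorm ε'] {f : α → ε} {g : α → ε'} {C : ℝ≥0∞}
    (h : ∫⁻ a, ‖f a‖ₑ ^ 2 ∂μ ≤ C ^ 2 * ∫⁻ a, ‖g a‖ₑ ^ 2 ∂μ) :
    eLpNorm f 2 μ ≤ C * eLpNorm g 2 μ := by
  rw [← sq_eLpNorm_two, ← sq_eLpNorm_two, ← mul_pow] at h
  exact (ENNReal.pow_le_pow_left_iff two_ne_zero).mp h

theorem integral_Ioi_exp_mul_sub {c : ℝ} (hc : 0 < c) (t : ℝ) :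
    ∫ s in Ioi t, Real.exp (c * (t - s)) = 1 / c := by
  simp_rw [mul_sub, Real.exp_sub, div_eq_mul_inv, ← Real.exp_neg, ← neg_mul]
  rw [integral_const_mul, integral_exp_mul_Ioi (neg_lt_zero.mpr hc), neg_div_neg_eq,
    ← mul_div_assoc, ← Real.exp_add]
  simp

theorem lintegral_Ioi_exp_mul_sub {c : ℝ} (hc : 0 < c) (t : ℝ) :
    ∫⁻ s in Ioi t, ENNReal.ofReal (Real.exp (c * (t - s))) = ENNReal.ofReal (1 / c) := by
  have hint : IntegrableOn (fun s => Real.exp (c * (t - s))) (Ioi t) := by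
    simp_rw [mul_sub, Real.exp_sub, div_eq_mul_inv, ← Real.exp_neg, ← neg_mul]
    exact (integrableOn_exp_mul_Ioi (neg_lt_zero.mpr hc) t).const_mul _
  rw [← ofReal_integral_eq_lintegral_ofReal hint (ae_of_all _ fun s => (Real.exp_pos _).le),
    integral_Ioi_exp_mul_sub hc]

theorem lintegral_Iio_exp_mul_sub {c : ℝ} (hc : 0 < c) (s : ℝ) :
    ∫⁻ t in Iio s, ENNReal.ofReal (Real.exp (c * (t - s))) = ENNReal.ofReal (1 / c) := by
  have hreflect := setLIntegral_map (μ := volume) (measurableSet_Iio (a := s))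
    (f := fun t => ENNReal.ofReal (Real.exp (c * (t - s)))) (by fun_prop) measurable_neg
  rw [Measure.map_neg_eq_self, neg_preimage, neg_Iio] at hreflect
  rw [hreflect, ← lintegral_Ioi_exp_mul_sub hc (-s)]
  congr 1 with r
  ring_nf

noncomputable def volterraKernel (c t s : ℝ) : ℝ≥0∞ :=
  (Ioi t).indicator (fun s => ENNReal.ofReal (Real.exp (c * (t - s)))) s

theorem measurable_volterraKernel (c : ℝ) : Measurable (uncurry (volterraKernel c)) :=
  (Measurable.ennreal_ofReal (by fun_prop)).indicator
    (measurableSet_lt measurable_fst measurable_snd)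

theorem lintegral_volterraKernel_snd_le {c : ℝ} (hc : 0 < c) (S : Set ℝ) (t : ℝ) :
    ∫⁻ s, volterraKernel c t s ∂(volume.restrict S) ≤ ENNReal.ofReal (1 / c) := calc
  _ ≤ ∫⁻ s, volterraKernel c t s := lintegral_mono' Measure.restrict_le_self le_rfl
  _ = ENNReal.ofReal (1 / c) := by
    rw [← lintegral_Ioi_exp_mul_sub hc t, ← lintegral_indicator measurableSet_Ioi]; rfl

theorem lintegral_volterraKernel_fst_le {c : ℝ} (hc : 0 < c) (S : Set ℝ) (s : ℝ) :
    ∫⁻ t, volterraKernel c t s ∂(volume.restrict S) ≤ ENNReal.ofReal (1 / c) := calc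
  _ ≤ ∫⁻ t, volterraKernel c t s := lintegral_mono' Measure.restrict_le_self le_rfl
  _ = ENNReal.ofReal (1 / c) := by
    rw [← lintegral_Iio_exp_mul_sub hc s, ← lintegral_indicator measurableSet_Iio]; rfl

theorem lintegral_volterraKernel_mul {b t : ℝ} (ht : b ≤ t) (c : ℝ) (F : ℝ → ℝ≥0∞) :
    ∫⁻ s, volterraKernel c t s * F s ∂(volume.restrict (Ici b))
      = ∫⁻ s in Ioi t, ENNReal.ofReal (Real.exp (c * (t - s))) * F s := by
  simp_rw [volterraKernel, ← indicator_mul_left]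
  rw [lintegral_indicator measurableSet_Ioi, Measure.restrict_restrict measurableSet_Ioi,
    inter_eq_left.mpr (Ioi_subset_Ici ht)]

theorem lintegral_sq_lintegral_volterraKernel_mul_le {c : ℝ} (hc : 0 < c) {F : ℝ → ℝ≥0∞}
    (hF : Measurable F) (S : Set ℝ) :
    ∫⁻ t, (∫⁻ s, volterraKernel c t s * F s ∂(volume.restrict S)) ^ 2 ∂(volume.restrict S)
      ≤ ENNReal.ofReal (1 / c) ^ 2 * ∫⁻ s, F s ^ 2 ∂(volume.restrict S) := by
  rw [sq]
  exact lintegral_sq_lintegral_mul_le_of_forall_lintegral_le (measurable_volterraKernel c) hF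
    (lintegral_volterraKernel_snd_le hc S) (lintegral_volterraKernel_fst_le hc S)

section
variable {H : Type*} [NormedAddCommGroup H] [InnerProductSpace ℂ H] [CompleteSpace H]

theorem norm_expIA_apply {A : H →L[ℂ] H} (hA : IsSelfAdjoint A) (τ : ℝ) (x : H) :
    ‖expIA A τ x‖ = ‖x‖ := by
  have hskew : (Complex.I * (τ : ℂ)) • A ∈ skewAdjoint (H →L[ℂ] H) := by
    rw [skewAdjoint.mem_iff, star_smul, hA.star_eq, ← neg_smul]
    congr 1
    simp
  -- the algebraic lemmas on `NormedSpace.exp` are stated over a `ℚ`-algebra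
  let +nondep : NormedAlgebra ℚ (H →L[ℂ] H) := .restrictScalars ℚ ℂ _
  have hunitary := NormedSpace.exp_mem_unitary_of_mem_skewAdjoint hskew
  exact ContinuousLinearMap.norm_map_of_mem_unitary hunitary x

theorem continuous_expIA (A : H →L[ℂ] H) : Continuous (expIA A) := by
  let +nondep : NormedAlgebra ℚ (H →L[ℂ] H) := .restrictScalars ℚ ℂ _
  unfold expIA
  fun_prop

noncomputable def volterraIntegrand (A : H →L[ℂ] H) (lam : ℂ) (f : ℝ → H) (t s : ℝ) : H :=
  Complex.exp (-Complex.I * lam * ((t : ℂ) - (s : ℂ))) • (expIA A (t - s)) (f s)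

theorem enorm_volterraIntegrand {A : H →L[ℂ] H} (hA : IsSelfAdjoint A) (lam : ℂ) (f : ℝ → H)
    (t s : ℝ) :
    ‖volterraIntegrand A lam f t s‖ₑ = ENNReal.ofReal (Real.exp (lam.im * (t - s))) * ‖f s‖ₑ := by
  rw [volterraIntegrand, ← ofReal_norm, norm_smul, Complex.norm_exp, norm_expIA_apply hA,
    ENNReal.ofReal_mul (Real.exp_pos _).le, ofReal_norm]
  congr 3
  simp [Complex.mul_re]

theorem stronglyMeasurable_volterraIntegrand (A : H →L[ℂ] H) (lam : ℂ) {f : ℝ → H}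
    (hf : StronglyMeasurable f) : StronglyMeasurable (uncurry (volterraIntegrand A lam f)) := by
  have hexp : Continuous fun p : ℝ × ℝ => Complex.exp (-Complex.I * lam * ((p.1 : ℂ) - p.2)) := by
    fun_prop
  have hop : Continuous fun p : ℝ × ℝ => expIA A (p.1 - p.2) := by
    have := continuous_expIA A; fun_prop
  exact hexp.stronglyMeasurable.smul
    (isBoundedBilinearMap_apply.continuous.comp_stronglyMeasurable
      (hop.stronglyMeasurable.prodMk (hf.comp_measurable measurable_snd)))

theorem volterra_bound_of_stronglyMeasurable {A : H →L[ℂ] H} (hA : IsSelfAdjoint A) {lam : ℂ}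
    (hlam : 0 < lam.im) {b : ℝ} {g : ℝ → H} (hg : StronglyMeasurable g)
    (hg2 : MemLp g 2 (volume.restrict (Ici b))) :
    (∀ᵐ t ∂(volume.restrict (Ici b)), IntegrableOn (volterraIntegrand A lam g t) (Ioi t))
    ∧ MemLp (fun t => ∫ s in Ioi t, volterraIntegrand A lam g t s) 2 (volume.restrict (Ici b))
    ∧ eLpNorm (fun t => ∫ s in Ioi t, volterraIntegrand A lam g t s) 2 (volume.restrict (Ici b))
        ≤ ENNReal.ofReal (1 / lam.im) * eLpNorm g 2 (volume.restrict (Ici b)) := by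
  set μ := volume.restrict (Ici b)
  set V : ℝ → ℝ≥0∞ := fun t => ∫⁻ s, volterraKernel lam.im t s * ‖g s‖ₑ ∂μ
  have hK := stronglyMeasurable_volterraIntegrand A lam hg
  have hV : ∀ t ∈ Ici b, ∫⁻ s in Ioi t, ‖volterraIntegrand A lam g t s‖ₑ = V t := fun t ht => by
    simp only [enorm_volterraIntegrand hA]
    exact (lintegral_volterraKernel_mul ht _ _).symm
  have hV_meas : Measurable V :=
    ((measurable_volterraKernel _).mul (hg.enorm.comp measurable_snd)).lintegral_prod_right'
  have hL2 : ∫⁻ t, V t ^ 2 ∂μ ≤ ENNReal.ofReal (1 / lam.im) ^ 2 * ∫⁻ s, ‖g s‖ₑ ^ 2 ∂μ :=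
    lintegral_sq_lintegral_volterraKernel_mul_le hlam hg.enorm _
  have hL2_fin : ∫⁻ t, V t ^ 2 ∂μ ≠ ⊤ := by
    refine (hL2.trans_lt (ENNReal.mul_lt_top (by simp) ?_)).ne
    rw [← sq_eLpNorm_two]
    exact ENNReal.pow_lt_top hg2.2
  have hV_fin : ∀ᵐ t ∂μ, V t < ⊤ := (ae_lt_top' (hV_meas.pow_const 2).aemeasurable hL2_fin).mono
    fun t ht => by simpa using ht
  have hu : ∀ᵐ t ∂μ, ‖∫ s in Ioi t, volterraIntegrand A lam g t s‖ₑ ≤ V t := by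
    filter_upwards [ae_restrict_mem measurableSet_Ici] with t ht
    exact (enorm_integral_le_lintegral_enorm _).trans_eq (hV t ht)
  have hbound := eLpNorm_two_le_of_lintegral_sq_le
    ((lintegral_mono_ae (hu.mono fun t ht => pow_le_pow_left' ht 2)).trans hL2)
  refine ⟨?_, ⟨(StronglyMeasurable.setIntegral_Ioi hK).aestronglyMeasurable,
    hbound.trans_lt (ENNReal.mul_lt_top ENNReal.ofReal_lt_top hg2.2)⟩, hbound⟩
  filter_upwards [hV_fin, ae_restrict_mem measurableSet_Ici] with t hfin ht
  exact ⟨(hK.comp_measurable measurable_prodMk_left).aestronglyMeasurable,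
    (hV t ht).trans_lt hfin⟩

theorem volterraIntegrand_ae_eq (A : H →L[ℂ] H) (lam : ℂ) {b t : ℝ} (ht : b ≤ t) {f g : ℝ → H}
    (hfg : f =ᵐ[volume.restrict (Ici b)] g) :
    volterraIntegrand A lam f t =ᵐ[volume.restrict (Ioi t)] volterraIntegrand A lam g t := by
  filter_upwards [ae_restrict_of_ae_restrict_of_subset (Ioi_subset_Ici ht) hfg] with s hs
  rw [volterraIntegrand, hs, volterraIntegrand]

end

/-- For `Im λ > 0` and `f ∈ L²([b, ∞); H)`, for a.e. `t ≥ b` the integrand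
`s ↦ e^{−iλ(t−s)} exp(i(t−s)A) f(s)` is Bochner integrable on `(t, ∞)`, and
`u(t) = ∫_t^∞ e^{−iλ(t−s)} exp(i(t−s)A) f(s) ds` lies in `L²([b, ∞); H)` with
`‖u‖ ≤ (1/Im λ) ‖f‖`. -/
theorem volterra_bound_right_halfline_upper
    {H : Type*} [NormedAddCommGroup H] [InnerProductSpace ℂ H] [CompleteSpace H]
    (A : H →L[ℂ] H) (hA : IsSelfAdjoint A) (b : ℝ) (lam : ℂ) (hlam : 0 < lam.im)
    (f : ℝ → H) (hf : MemLp f 2 (volume.restrict (Set.Ici b)))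
    (u : ℝ → H)
    (hu : u = fun t : ℝ => ∫ s in Set.Ioi t,
      Complex.exp (-Complex.I * lam * ((t : ℂ) - (s : ℂ))) • (expIA A (t - s)) (f s)) :
    (∀ᵐ (t : ℝ) ∂(volume.restrict (Set.Ici b)),
      IntegrableOn (fun s : ℝ =>
        Complex.exp (-Complex.I * lam * ((t : ℂ) - (s : ℂ))) • (expIA A (t - s)) (f s))
        (Set.Ioi t) volume)
    ∧ MemLp u 2 (volume.restrict (Set.Ici b))
    ∧ eLpNorm u 2 (volume.restrict (Set.Ici b))
        ≤ ENNReal.ofReal (1 / lam.im) * eLpNorm f 2 (volume.restrict (Set.Ici b)) := by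
  -- a strongly measurable representative makes the integrand jointly measurable in `(t, s)`
  obtain ⟨g, hg, hfg⟩ := hf.aestronglyMeasurable
  obtain ⟨hint, hmem, hbound⟩ := volterra_bound_of_stronglyMeasurable hA hlam hg (hf.ae_eq hfg)
  have hcongr : ∀ᵐ t ∂(volume.restrict (Ici b)),
      volterraIntegrand A lam f t =ᵐ[volume.restrict (Ioi t)] volterraIntegrand A lam g t := by
    filter_upwards [ae_restrict_mem measurableSet_Ici] with t ht
    exact volterraIntegrand_ae_eq A lam ht hfg
  have hug : u =ᵐ[volume.restrict (Ici b)] fun t => ∫ s in Ioi t, volterraIntegrand A lam g t s :=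
    hu ▸ hcongr.mono fun t ht => integral_congr_ae ht
  refine ⟨?_, hmem.ae_eq hug.symm, ?_⟩
  · filter_upwards [hint, hcongr] with t hint_t ht
    exact hint_t.congr ht.symm
  · rw [eLpNorm_congr_ae hug, eLpNorm_congr_ae hfg]
    exact hbound
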